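/- There exist points x, y ∈ X with x_0 ≠ y_0 and x_i = y_i for all i ≠ 0. Consequently the shift action on X is faithful: for every n ≥ 1 there exists z ∈ X with σ^n(z) ≠ z. -/
import Mathlib


/-- The shift map σ on the full shift `{0,1}^ℤ`, `σ(x)_i = x_{i+1}`. -/
def shift (x : ℤ → Bool) : ℤ → Bool := fun i => x (i + 1)

/-- The iterate `σ^k` of the shift, for `k ∈ ℤ`. -/
def shiftZ (k : ℤ) (x : ℤ → Bool) : ℤ → Bool := fun i => x (i + k)

/-- `wlist n` is the list `[w_0, w_1, …, w_{2n+1}]` of the words of the construction: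
`w_0 = 0`, `w_1 = 1`, and for `n ≥ 1`, `a ∈ {0,1}`,
`w_{2n+a} = w_{2n-2} w_a w_{2n-2} ∏_{k=0}^{2n-1} (w_k^n w_{2n-2})`. -/
def wlist : ℕ → List (List Bool)
  | 0 => [[false], [true]]
  | n + 1 =>
    let prev := wlist n
    let w : ℕ → List Bool := fun k => prev.getD k []
    let base := w (2 * n)
    let tail := (List.range (2 * n + 2)).flatMap
      (fun k => (List.replicate (n + 1) (w k)).flatten ++ base)
    prev ++ [base ++ w 0 ++ base ++ tail, base ++ w 1 ++ base ++ tail]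

/-- The word `w_n`. -/
def wrd (n : ℕ) : List Bool := (wlist n).getD n []

/-- The periodic point `u^ℤ` associated to a nonempty word `u`;
it satisfies `(u^ℤ)_{m|u|+i} = u_i` for all `m ∈ ℤ`, `0 ≤ i < |u|`. -/
def perPt (u : List Bool) : ℤ → Bool := fun i => u.getD ((i % (u.length : ℤ)).toNat) false

/-- The union of the shift orbits of the points `w_n^ℤ`. -/
def Xgen : Set (ℤ → Bool) := {x | ∃ (n : ℕ) (k : ℤ), x = shiftZ k (perPt (wrd n))}

/-- The subshift `X`: the smallest subshift containing the points `w_n^ℤ`,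
i.e. the closure of the union of their shift orbits. -/
def XX : Set (ℤ → Bool) := closure Xgen

/-- The word `u` occurs as a (contiguous) subword of the point `x`. -/
def occursIn (u : List Bool) (x : ℤ → Bool) : Prop :=
  ∃ i : ℤ, ∀ j : ℕ, j < u.length → x (i + (j : ℤ)) = u.getD j false

lemma wlist_succ (n : ℕ) : ∃ A B : List Bool, wlist (n + 1) = wlist n ++ [A, B] :=
  ⟨_, _, rfl⟩

lemma wlist_length (n : ℕ) : (wlist n).length = 2 * n + 2 := by
  induction n with
  | zero => rfl
  | succ n ih =>
    obtain ⟨A, B, h⟩ := wlist_succ n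
    simp [h, List.length_append, ih]; omega

lemma wlist_getD_mono {n m : ℕ} (h : n ≤ m) {k : ℕ} (hk : k < 2 * n + 2) :
    (wlist m).getD k [] = (wlist n).getD k [] := by
  induction m with
  | zero =>
    have : n = 0 := by omega
    subst this; rfl
  | succ m ih =>
    rcases Nat.lt_or_ge n (m + 1) with h' | h'
    · have hnm : n ≤ m := by omega
      obtain ⟨A, B, hAB⟩ := wlist_succ m
      rw [hAB, List.getD_append _ _ _ _ (by rw [wlist_length]; omega), ih hnm]
    · have : n = m + 1 := by omega
      subst this; rfl

lemma wrd_eq_getD {n k : ℕ} (hk : k < 2 * n + 2) : wrd k = (wlist n).getD k [] := by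
  rcases le_total n k with h | h
  · show (wlist k).getD k [] = _
    exact wlist_getD_mono h hk
  · exact (wlist_getD_mono h (by omega)).symm

lemma wrd_pair (m : ℕ) : ∃ r : List Bool,
    wrd (2 * m + 2) = wrd (2 * m) ++ (false :: r) ∧
    wrd (2 * m + 3) = wrd (2 * m) ++ (true :: r) := by
  have h2 : wrd (2 * m + 2) = (wlist (m + 1)).getD (2 * m + 2) [] :=
    wrd_eq_getD (by omega)
  have h3 : wrd (2 * m + 3) = (wlist (m + 1)).getD (2 * m + 3) [] :=
    wrd_eq_getD (by omega)
  have hbase : (wlist m).getD (2 * m) [] = wrd (2 * m) := (wrd_eq_getD (by omega)).symm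
  have h0 : (wlist m).getD 0 [] = [false] := by
    have h := wlist_getD_mono (Nat.zero_le m) (k := 0) (by omega)
    rw [h]; rfl
  have h1 : (wlist m).getD 1 [] = [true] := by
    have h := wlist_getD_mono (Nat.zero_le m) (k := 1) (by omega)
    rw [h]; rfl
  have hlen : (wlist m).length = 2 * m + 2 := wlist_length m
  refine ⟨wrd (2 * m) ++ (List.range (2 * m + 2)).flatMap
      (fun k => (List.replicate (m + 1) ((wlist m).getD k [])).flatten ++ wrd (2 * m)),
      ?_, ?_⟩
  · rw [h2]
    show (wlist m ++ [_, _]).getD _ [] = _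
    rw [List.getD_append_right _ _ _ _ (by rw [hlen])]
    rw [hlen, Nat.sub_self]
    show (wlist m).getD (2 * m) [] ++ (wlist m).getD 0 [] ++ (wlist m).getD (2 * m) []
        ++ _ = _
    rw [hbase, h0]
    have hbase' : (wlist m)[2 * m]?.getD [] = wrd (2 * m) := by
      rw [← List.getD_eq_getElem?_getD]; exact hbase
    simp [List.append_assoc, hbase']
  · rw [h3]
    show (wlist m ++ [_, _]).getD _ [] = _
    rw [List.getD_append_right _ _ _ _ (by rw [hlen]; omega)]
    rw [hlen, show 2 * m + 3 - (2 * m + 2) = 1 from by omega]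
    show (wlist m).getD (2 * m) [] ++ (wlist m).getD 1 [] ++ (wlist m).getD (2 * m) []
        ++ _ = _
    rw [hbase, h1]
    have hbase' : (wlist m)[2 * m]?.getD [] = wrd (2 * m) := by
      rw [← List.getD_eq_getElem?_getD]; exact hbase
    simp [List.append_assoc, hbase']

lemma wrd_len_lb (m : ℕ) : m + 1 ≤ (wrd (2 * m)).length := by
  induction m with
  | zero => show 1 ≤ (wrd 0).length; rfl
  | succ m ih =>
    obtain ⟨r, h2, _⟩ := wrd_pair m
    have : 2 * (m + 1) = 2 * m + 2 := by omega
    rw [this, h2]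
    simp [List.length_append]
    omega

lemma getD_mid (P r : List Bool) (c : Bool) :
    (P ++ (c :: r)).getD P.length false = c := by
  rw [List.getD_append_right _ _ _ _ (le_refl _)]
  simp

lemma getD_flip (P r : List Bool) {k : ℕ} (hk : k ≠ P.length) :
    (P ++ (false :: r)).getD k false = (P ++ (true :: r)).getD k false := by
  rcases Nat.lt_or_ge k P.length with h | h
  · rw [List.getD_append _ _ _ _ h, List.getD_append _ _ _ _ h]
  · rw [List.getD_append_right _ _ _ _ h, List.getD_append_right _ _ _ _ h]
    obtain ⟨j, hj⟩ : ∃ j, k - P.length = j + 1 := ⟨k - P.length - 1, by omega⟩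
    rw [hj, List.getD_cons_succ, List.getD_cons_succ]

lemma perPt_pair_zero (P r : List Bool) (c : Bool) :
    perPt (P ++ (c :: r)) ((P.length : ℤ)) = c := by
  show (P ++ (c :: r)).getD _ false = c
  have hlt : ((P.length : ℕ) : ℤ) < ((P ++ (c :: r)).length : ℤ) := by
    simp [List.length_append]
  rw [Int.emod_eq_of_lt (Int.natCast_nonneg _) hlt]
  rw [Int.toNat_natCast]
  exact getD_mid P r c

lemma perPt_pair_ne (P r : List Bool) (i : ℤ) (hi : i ≠ 0)
    (hlt : |i| < ((P ++ (false :: r)).length : ℤ)) :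
    perPt (P ++ (false :: r)) (i + P.length) = perPt (P ++ (true :: r)) (i + P.length) := by
  have hlen : (P ++ (true :: r)).length = (P ++ (false :: r)).length := by simp
  have hLpos : (0 : ℤ) < ((P ++ (false :: r)).length : ℤ) :=
    lt_of_le_of_lt (abs_nonneg i) hlt
  show (P ++ (false :: r)).getD _ false = (P ++ (true :: r)).getD _ false
  rw [hlen]
  apply getD_flip
  intro hkeq
  set L : ℤ := ((P ++ (false :: r)).length : ℤ) with hLdef
  have hnn : 0 ≤ (i + (P.length : ℤ)) % L := Int.emod_nonneg _ (ne_of_gt hLpos)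
  have hmod : (i + (P.length : ℤ)) % L = (P.length : ℤ) := by omega
  have hPlt : (P.length : ℤ) < L := by
    rw [hLdef]
    have h : P.length < (P ++ (false :: r)).length := by simp
    exact_mod_cast h
  have hdvd : L ∣ i := by
    have h1 : (i + (P.length : ℤ)) % L = (P.length : ℤ) % L := by
      rw [hmod, Int.emod_eq_of_lt (Int.natCast_nonneg _) hPlt]
    have h0 := Int.emod_eq_emod_iff_emod_sub_eq_zero.mp h1
    have h2 : i + (P.length : ℤ) - (P.length : ℤ) = i := by ring
    rw [h2] at h0
    exact Int.dvd_of_emod_eq_zero h0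
  have hle := Int.le_of_dvd (abs_pos.mpr hi) ((dvd_abs _ _).mpr hdvd)
  exact absurd hlt (not_lt.mpr hle)

lemma ab_zero (m : ℕ) :
    shiftZ ((wrd (2 * m)).length : ℤ) (perPt (wrd (2 * m + 2))) 0 = false ∧
    shiftZ ((wrd (2 * m)).length : ℤ) (perPt (wrd (2 * m + 3))) 0 = true := by
  obtain ⟨r, hu, hv⟩ := wrd_pair m
  constructor
  · show perPt (wrd (2 * m + 2)) (0 + ((wrd (2 * m)).length : ℤ)) = false
    rw [zero_add, hu]
    exact perPt_pair_zero _ _ _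
  · show perPt (wrd (2 * m + 3)) (0 + ((wrd (2 * m)).length : ℤ)) = true
    rw [zero_add, hv]
    exact perPt_pair_zero _ _ _

lemma ab_diff (m : ℕ) (i : ℤ) (hi : i ≠ 0) (hm : |i| ≤ (m : ℤ)) :
    shiftZ ((wrd (2 * m)).length : ℤ) (perPt (wrd (2 * m + 2))) i =
    shiftZ ((wrd (2 * m)).length : ℤ) (perPt (wrd (2 * m + 3))) i := by
  obtain ⟨r, hu, hv⟩ := wrd_pair m
  have hlb : (m : ℤ) + 1 ≤ ((wrd (2 * m)).length : ℤ) := by exact_mod_cast wrd_len_lb m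
  have hlt : |i| < (((wrd (2 * m)) ++ (false :: r)).length : ℤ) := by
    have : ((wrd (2 * m)).length : ℤ) ≤ (((wrd (2 * m)) ++ (false :: r)).length : ℤ) := by
      push_cast [List.length_append]; omega
    linarith
  show perPt (wrd (2 * m + 2)) (i + ((wrd (2 * m)).length : ℤ)) =
      perPt (wrd (2 * m + 3)) (i + ((wrd (2 * m)).length : ℤ))
  rw [hu, hv]
  exact perPt_pair_ne _ _ _ hi hlt

lemma shift_iter (n : ℕ) (z : ℤ → Bool) (i : ℤ) : shift^[n] z i = z (i + n) := by
  induction n generalizing z with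
  | zero => simp
  | succ n ih =>
    rw [Function.iterate_succ_apply, ih (shift z)]
    show z (i + n + 1) = z (i + (n + 1 : ℕ))
    congr 1; push_cast; ring

/-- There exist points `x, y ∈ X` differing exactly at the origin; consequently the
shift action on `X` is faithful. -/
theorem stmt9 :
    (∃ x ∈ XX, ∃ y ∈ XX, x 0 ≠ y 0 ∧ ∀ i : ℤ, i ≠ 0 → x i = y i) ∧
    (∀ n : ℕ, 1 ≤ n → ∃ z ∈ XX, shift^[n] z ≠ z) := by
  classical
  have main : ∃ x ∈ XX, ∃ y ∈ XX, x 0 = false ∧ y 0 = true ∧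
      ∀ i : ℤ, i ≠ 0 → x i = y i := by
    set U : Ultrafilter ℕ := Ultrafilter.of Filter.atTop with hUdef
    have hUle : (U : Filter ℕ) ≤ Filter.atTop := Ultrafilter.of_le _
    set a : ℕ → (ℤ → Bool) :=
      fun m => shiftZ ((wrd (2 * m)).length : ℤ) (perPt (wrd (2 * m + 2))) with ha
    set b : ℕ → (ℤ → Bool) :=
      fun m => shiftZ ((wrd (2 * m)).length : ℤ) (perPt (wrd (2 * m + 3))) with hb
    have haX : ∀ m, a m ∈ Xgen := fun m => ⟨2 * m + 2, _, rfl⟩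
    have hbX : ∀ m, b m ∈ Xgen := fun m => ⟨2 * m + 3, _, rfl⟩
    set x : ℤ → Bool := fun i => if {m | a m i = true} ∈ U then true else false with hx
    set y : ℤ → Bool := fun i => if {m | b m i = true} ∈ U then true else false with hy
    have hxa : ∀ i, ∀ᶠ m in (U : Filter ℕ), a m i = x i := by
      intro i
      by_cases h : {m | a m i = true} ∈ U
      · have hxi : x i = true := if_pos h
        rw [hxi]; exact h
      · have hxi : x i = false := if_neg h
        rw [hxi]
        filter_upwards [Ultrafilter.compl_mem_iff_notMem.mpr h] with m hm
        simpa using hm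
    have hyb : ∀ i, ∀ᶠ m in (U : Filter ℕ), b m i = y i := by
      intro i
      by_cases h : {m | b m i = true} ∈ U
      · have hyi : y i = true := if_pos h
        rw [hyi]; exact h
      · have hyi : y i = false := if_neg h
        rw [hyi]
        filter_upwards [Ultrafilter.compl_mem_iff_notMem.mpr h] with m hm
        simpa using hm
    have hxX : x ∈ XX := by
      refine mem_closure_of_tendsto (f := a) (b := (U : Filter ℕ)) ?_
        (Filter.Eventually.of_forall haX)
      rw [tendsto_pi_nhds]
      intro i
      exact tendsto_nhds_of_eventually_eq (hxa i)
    have hyX : y ∈ XX := by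
      refine mem_closure_of_tendsto (f := b) (b := (U : Filter ℕ)) ?_
        (Filter.Eventually.of_forall hbX)
      rw [tendsto_pi_nhds]
      intro i
      exact tendsto_nhds_of_eventually_eq (hyb i)
    refine ⟨x, hxX, y, hyX, ?_, ?_, ?_⟩
    · obtain ⟨m, hm⟩ := (hxa 0).exists
      rw [← hm]; exact (ab_zero m).1
    · obtain ⟨m, hm⟩ := (hyb 0).exists
      rw [← hm]; exact (ab_zero m).2
    · intro i hi
      have hev : ∀ᶠ m in (U : Filter ℕ), i.natAbs ≤ m :=
        hUle (Filter.eventually_ge_atTop i.natAbs)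
      obtain ⟨m, hm1, hm2⟩ := ((hxa i).and ((hyb i).and hev)).exists
      rw [← hm1, ← hm2.1]
      refine ab_diff m i hi ?_
      rw [Int.abs_eq_natAbs]
      exact_mod_cast hm2.2
  obtain ⟨x, hxX, y, hyX, hx0, hy0, hxy⟩ := main
  constructor
  · exact ⟨x, hxX, y, hyX, by rw [hx0, hy0]; simp, hxy⟩
  · intro n hn
    by_cases h : shift^[n] x = x
    · refine ⟨y, hyX, ?_⟩
      intro hy
      have hxn : x (0 + (n : ℤ)) = x 0 := by rw [← shift_iter n x 0, h]
      have hyn : y (0 + (n : ℤ)) = y 0 := by rw [← shift_iter n y 0, hy]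
      have hne : (0 : ℤ) + (n : ℤ) ≠ 0 := by
        have : (1 : ℤ) ≤ (n : ℤ) := by exact_mod_cast hn
        omega
      have := hxy _ hne
      rw [hxn, hyn, hx0, hy0] at this
      simp at this
    · exact ⟨x, hxX, h⟩
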